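/- Γ(N) ≤ ||N∘T||_◇ for any quantum channel N, where the diamond norm of N∘T is given by the SDP: maximize (1/2)tr(J_N^{T_B}(X + X†)) over operators X and density operators ρ₀, ρ₁ with [[ρ₀⊗I, X],[X†, ρ₁⊗I]] ≥ 0. Specifically, any primal-feasible (R, ρ) for Γ yields the feasible point (X, ρ₀, ρ₁) = (R^{T_B}, ρ, ρ) with objective value tr(J_N R). -/

import Mathlib

open Matrix Kronecker ComplexOrder

/-- Partial transpose on the second (B) system of a bipartite matrix. -/
def ptB {A B : Type*} (M : Matrix (A × B) (A × B) ℂ) : Matrix (A × B) (A × B) ℂ :=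
  Matrix.of fun p q => M (p.1, q.2) (q.1, p.2)

/-- The SDP value `Γ(N)` of a channel with Choi matrix `J`. -/
noncomputable def Gamma {A B : Type*} [Fintype A] [Fintype B] [DecidableEq A] [DecidableEq B]
    (J : Matrix (A × B) (A × B) ℂ) : ℝ :=
  sSup {r | ∃ (R : Matrix (A × B) (A × B) ℂ) (ρ : Matrix A A ℂ),
    R.PosSemidef ∧ ρ.PosSemidef ∧ ρ.trace = 1 ∧
    (ρ ⊗ₖ (1 : Matrix B B ℂ) - ptB R).PosSemidef ∧
    (ptB R + ρ ⊗ₖ (1 : Matrix B B ℂ)).PosSemidef ∧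
    r = ((J * R).trace).re}

/-- Watrous' SDP characterization of the diamond norm of `N ∘ T` (taken as the
definition here): maximize `(1/2) tr(J^{T_B}(X + X†))` over `X`, and density
operators `ρ₀, ρ₁` with `[[ρ₀⊗I, X],[X†, ρ₁⊗I]] ≥ 0`. -/
noncomputable def diamondNormNT {A B : Type*} [Fintype A] [Fintype B]
    [DecidableEq A] [DecidableEq B] (J : Matrix (A × B) (A × B) ℂ) : ℝ :=
  sSup {r | ∃ (X : Matrix (A × B) (A × B) ℂ) (ρ₀ ρ₁ : Matrix A A ℂ),
    ρ₀.PosSemidef ∧ ρ₀.trace = 1 ∧ ρ₁.PosSemidef ∧ ρ₁.trace = 1 ∧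
    (Matrix.fromBlocks (ρ₀ ⊗ₖ (1 : Matrix B B ℂ)) X
      Xᴴ (ρ₁ ⊗ₖ (1 : Matrix B B ℂ))).PosSemidef ∧
    r = (1 / 2) * (((ptB J) * (X + Xᴴ)).trace).re}


/-! If `(R, ρ)` is feasible for `Γ`, then `X = R^{T_B}` is Hermitian with `-ρ ⊗ I ≤ X ≤ ρ ⊗ I`,
and the block matrix `[[ρ ⊗ I, X], [X, ρ ⊗ I]]` is half the sum of `[[S, S], [S, S]]` for
`S = ρ ⊗ I + X` and `[[S', -S'], [-S', S']]` for `S' = ρ ⊗ I - X`, both positive semidefinite.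
So `(R^{T_B}, ρ, ρ)` is feasible for the diamond-norm SDP, and since the partial transpose
preserves `tr(M N)`, it has objective value `tr(J R)`. Comparing suprema then only needs the
diamond-norm values to be bounded above (the block constraint forces `|X_pq| ≤ 1`) and, as
`sSup ∅ = 0`, the Γ-values to be nonempty whenever the diamond-norm values are (take `R = 0`). -/

namespace Matrix

variable {n 𝕜 : Type*} [RCLike 𝕜]

lemma PosSemidef.norm_apply_sq_le {M : Matrix n n 𝕜} (hM : M.PosSemidef) (i j : n) :
    ‖M i j‖ ^ 2 ≤ RCLike.re (M i i) * RCLike.re (M j j) := by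
  have h := (hM.submatrix ![i, j]).det_nonneg
  simp only [det_fin_two, submatrix_apply, Matrix.cons_val_zero, Matrix.cons_val_one] at h
  rw [← hM.1.apply j i, RCLike.star_def, RCLike.mul_conj, ← hM.1.coe_re_apply_self i,
    ← hM.1.coe_re_apply_self j, sub_nonneg] at h
  exact_mod_cast h

variable [Fintype n]

lemma PosSemidef.fromBlocks_of_sub_of_add [DecidableEq n] {S X : Matrix n n 𝕜}
    (h₁ : (S - X).PosSemidef) (h₂ : (S + X).PosSemidef) :
    (fromBlocks S X Xᴴ S).PosSemidef := by
  have hX : Xᴴ = X := by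
    have h := congrArg₂ (· - ·) h₂.1.eq h₁.1.eq
    simp only [conjTranspose_add, conjTranspose_sub, add_sub_sub_cancel, ← two_smul 𝕜] at h
    exact smul_right_injective _ two_ne_zero h
  let P : Matrix (n ⊕ n) n 𝕜 := fromRows 1 1
  let Q : Matrix (n ⊕ n) n 𝕜 := fromRows 1 (-1)
  have hsum : fromBlocks S X Xᴴ S = (2⁻¹ : 𝕜) • (P * (S + X) * Pᴴ + Q * (S - X) * Qᴴ) := by
    simp only [P, Q, hX, conjTranspose_fromRows_eq_fromCols_conjTranspose, conjTranspose_one,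
      conjTranspose_neg, mul_fromCols, fromRows_mul, Matrix.one_mul, Matrix.mul_one,
      Matrix.neg_mul, Matrix.mul_neg]
    ext (i | i) (j | j) <;> simp <;> ring
  rw [hsum]
  exact ((h₂.mul_mul_conjTranspose_same P).add (h₁.mul_mul_conjTranspose_same Q)).smul
    (by positivity)

lemma PosSemidef.re_apply_self_le_re_trace {M : Matrix n n 𝕜} (hM : M.PosSemidef) (i : n) :
    RCLike.re (M i i) ≤ RCLike.re M.trace := by
  rw [trace, map_sum]
  exact Finset.single_le_sum (f := fun j => RCLike.re (M j j))
    (fun j _ => (RCLike.nonneg_iff.1 hM.diag_nonneg).1) (Finset.mem_univ i)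

lemma re_trace_mul_le {K Y : Matrix n n 𝕜} {c : ℝ} (hY : ∀ i j, ‖Y i j‖ ≤ c) :
    RCLike.re (K * Y).trace ≤ c * ∑ i, ∑ j, ‖K i j‖ := by
  calc RCLike.re (K * Y).trace
      ≤ ‖(K * Y).trace‖ := RCLike.re_le_norm _
    _ ≤ ∑ i, ∑ j, ‖K i j * Y j i‖ :=
        (norm_sum_le _ _).trans (Finset.sum_le_sum fun i _ => norm_sum_le _ _)
    _ ≤ ∑ i, ∑ j, c * ‖K i j‖ := by
        gcongr with i _ j _
        rw [norm_mul, mul_comm]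
        exact mul_le_mul_of_nonneg_right (hY j i) (norm_nonneg _)
    _ = c * ∑ i, ∑ j, ‖K i j‖ := by simp only [Finset.mul_sum]

end Matrix

lemma Real.sSup_le_sSup_of_subset {s t : Set ℝ} (hst : s ⊆ t) (ht : BddAbove t)
    (hne : t.Nonempty → s.Nonempty) : sSup s ≤ sSup t := by
  rcases t.eq_empty_or_nonempty with rfl | ht'
  · rw [Set.subset_empty_iff.1 hst]
  · exact csSup_le_csSup ht (hne ht') hst

section PartialTranspose

variable {A B : Type*}

@[simp]
lemma ptB_zero : ptB (0 : Matrix (A × B) (A × B) ℂ) = 0 := rfl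

lemma conjTranspose_ptB (M : Matrix (A × B) (A × B) ℂ) : (ptB M)ᴴ = ptB Mᴴ := rfl

lemma trace_ptB_mul_ptB [Fintype A] [Fintype B] (M N : Matrix (A × B) (A × B) ℂ) :
    (ptB M * ptB N).trace = (M * N).trace := by
  simp only [trace, diag, mul_apply, ptB, of_apply, Fintype.sum_prod_type]
  refine Finset.sum_congr rfl fun a _ => ?_
  rw [Finset.sum_comm_cycle]
  exact Finset.sum_congr rfl fun _ _ => Finset.sum_comm

lemma half_re_trace_ptB_mul_add_conjTranspose [Fintype A] [Fintype B]
    (J : Matrix (A × B) (A × B) ℂ) {R : Matrix (A × B) (A × B) ℂ} (hR : R.IsHermitian) :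
    (1 / 2) * ((ptB J * (ptB R + (ptB R)ᴴ)).trace).re = ((J * R).trace).re := by
  rw [conjTranspose_ptB, hR.eq, Matrix.mul_add, trace_add, trace_ptB_mul_ptB, Complex.add_re]
  ring

end PartialTranspose

section SDP

variable {A B : Type*} [Fintype A] [DecidableEq B]

lemma norm_apply_le_one_of_fromBlocks_kronecker_posSemidef {X : Matrix (A × B) (A × B) ℂ}
    {ρ₀ ρ₁ : Matrix A A ℂ} (hρ₀ : ρ₀.PosSemidef) (htr₀ : ρ₀.trace = 1)
    (hρ₁ : ρ₁.PosSemidef) (htr₁ : ρ₁.trace = 1)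
    (hX : (fromBlocks (ρ₀ ⊗ₖ (1 : Matrix B B ℂ)) X
      Xᴴ (ρ₁ ⊗ₖ (1 : Matrix B B ℂ))).PosSemidef) (p q : A × B) :
    ‖X p q‖ ≤ 1 := by
  have h := hX.norm_apply_sq_le (Sum.inl p) (Sum.inr q)
  simp only [fromBlocks_apply₁₁, fromBlocks_apply₁₂, fromBlocks_apply₂₂, kroneckerMap_apply,
    one_apply_eq, mul_one] at h
  have h₀ := hρ₀.re_apply_self_le_re_trace p.1
  have h₁ := hρ₁.re_apply_self_le_re_trace q.1
  rw [htr₀, RCLike.one_re] at h₀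
  rw [htr₁, RCLike.one_re] at h₁
  refine (pow_le_one_iff_of_nonneg (norm_nonneg _) two_ne_zero).1 (h.trans ?_)
  exact mul_le_one₀ h₀ (RCLike.nonneg_iff.1 (hρ₁.diag_nonneg (i := q.1))).1 h₁

variable [Fintype B]

-- `Gamma J` and `diamondNormNT J` are, by definition, the suprema of these sets.
def gammaValues (J : Matrix (A × B) (A × B) ℂ) : Set ℝ :=
  {r | ∃ (R : Matrix (A × B) (A × B) ℂ) (ρ : Matrix A A ℂ),
    R.PosSemidef ∧ ρ.PosSemidef ∧ ρ.trace = 1 ∧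
    (ρ ⊗ₖ (1 : Matrix B B ℂ) - ptB R).PosSemidef ∧
    (ptB R + ρ ⊗ₖ (1 : Matrix B B ℂ)).PosSemidef ∧
    r = ((J * R).trace).re}

def diamondNormNTValues (J : Matrix (A × B) (A × B) ℂ) : Set ℝ :=
  {r | ∃ (X : Matrix (A × B) (A × B) ℂ) (ρ₀ ρ₁ : Matrix A A ℂ),
    ρ₀.PosSemidef ∧ ρ₀.trace = 1 ∧ ρ₁.PosSemidef ∧ ρ₁.trace = 1 ∧
    (Matrix.fromBlocks (ρ₀ ⊗ₖ (1 : Matrix B B ℂ)) X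
      Xᴴ (ρ₁ ⊗ₖ (1 : Matrix B B ℂ))).PosSemidef ∧
    r = (1 / 2) * (((ptB J) * (X + Xᴴ)).trace).re}

lemma fromBlocks_ptB_posSemidef [DecidableEq A] {R : Matrix (A × B) (A × B) ℂ} {ρ : Matrix A A ℂ}
    (h₁ : (ρ ⊗ₖ (1 : Matrix B B ℂ) - ptB R).PosSemidef)
    (h₂ : (ptB R + ρ ⊗ₖ (1 : Matrix B B ℂ)).PosSemidef) :
    (fromBlocks (ρ ⊗ₖ (1 : Matrix B B ℂ)) (ptB R)
      (ptB R)ᴴ (ρ ⊗ₖ (1 : Matrix B B ℂ))).PosSemidef :=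
  PosSemidef.fromBlocks_of_sub_of_add h₁ (add_comm (ptB R) _ ▸ h₂)

lemma gammaValues_subset_diamondNormNTValues [DecidableEq A] (J : Matrix (A × B) (A × B) ℂ) :
    gammaValues J ⊆ diamondNormNTValues J := by
  rintro r ⟨R, ρ, hR, hρ, htr, h₁, h₂, rfl⟩
  exact ⟨ptB R, ρ, ρ, hρ, htr, hρ, htr, fromBlocks_ptB_posSemidef h₁ h₂,
    (half_re_trace_ptB_mul_add_conjTranspose J hR.1).symm⟩

lemma gammaValues_nonempty {J : Matrix (A × B) (A × B) ℂ}
    (h : (diamondNormNTValues J).Nonempty) : (gammaValues J).Nonempty := by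
  obtain ⟨_, _, ρ, _, hρ, htr, -⟩ := h
  have hS : (ρ ⊗ₖ (1 : Matrix B B ℂ)).PosSemidef := hρ.kronecker PosSemidef.one
  exact ⟨_, 0, ρ, PosSemidef.zero, hρ, htr, by simpa using hS, by simpa using hS, rfl⟩

lemma bddAbove_diamondNormNTValues (J : Matrix (A × B) (A × B) ℂ) :
    BddAbove (diamondNormNTValues J) := by
  refine ⟨∑ p, ∑ q, ‖ptB J p q‖, ?_⟩
  rintro r ⟨X, ρ₀, ρ₁, hρ₀, htr₀, hρ₁, htr₁, hX, rfl⟩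
  have hentry p q := norm_apply_le_one_of_fromBlocks_kronecker_posSemidef hρ₀ htr₀ hρ₁ htr₁ hX p q
  have hentry_add : ∀ p q, ‖(X + Xᴴ) p q‖ ≤ 2 := fun p q => by
    rw [Matrix.add_apply, conjTranspose_apply, one_add_one_eq_two.symm]
    exact (norm_add_le _ _).trans (add_le_add (hentry p q) ((norm_star _).trans_le (hentry q p)))
  have := re_trace_mul_le (K := ptB J) hentry_add
  rw [← RCLike.re_to_complex] at *
  linarith

end SDP

theorem stmt_12_general {A B : Type*} [Fintype A] [Fintype B] [DecidableEq A] [DecidableEq B]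
    (J : Matrix (A × B) (A × B) ℂ) :
    (∀ (R : Matrix (A × B) (A × B) ℂ) (ρ : Matrix A A ℂ),
      R.PosSemidef → ρ.PosSemidef → ρ.trace = 1 →
      (ρ ⊗ₖ (1 : Matrix B B ℂ) - ptB R).PosSemidef →
      (ptB R + ρ ⊗ₖ (1 : Matrix B B ℂ)).PosSemidef →
      (Matrix.fromBlocks (ρ ⊗ₖ (1 : Matrix B B ℂ)) (ptB R)
          (ptB R)ᴴ (ρ ⊗ₖ (1 : Matrix B B ℂ))).PosSemidef ∧
        (1 / 2) * (((ptB J) * (ptB R + (ptB R)ᴴ)).trace).re = ((J * R).trace).re) ∧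
    Gamma J ≤ diamondNormNT J :=
  ⟨fun _ _ hR _ _ h₁ h₂ =>
      ⟨fromBlocks_ptB_posSemidef h₁ h₂, half_re_trace_ptB_mul_add_conjTranspose J hR.1⟩,
    Real.sSup_le_sSup_of_subset (gammaValues_subset_diamondNormNTValues J)
      (bddAbove_diamondNormNTValues J) gammaValues_nonempty⟩

/-- `Γ(N) ≤ ‖N ∘ T‖_◇`. Moreover any primal-feasible `(R, ρ)` for `Γ`
yields the feasible point `(X, ρ₀, ρ₁) = (R^{T_B}, ρ, ρ)` for the diamond norm SDP,
with objective value `tr(J_N R)`. -/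
theorem stmt_12 {A B : Type*} [Fintype A] [Fintype B] [DecidableEq A] [DecidableEq B]
    (J : Matrix (A × B) (A × B) ℂ) (hJ : J.PosSemidef) :
    (∀ (R : Matrix (A × B) (A × B) ℂ) (ρ : Matrix A A ℂ),
      R.PosSemidef → ρ.PosSemidef → ρ.trace = 1 →
      (ρ ⊗ₖ (1 : Matrix B B ℂ) - ptB R).PosSemidef →
      (ptB R + ρ ⊗ₖ (1 : Matrix B B ℂ)).PosSemidef →
      (Matrix.fromBlocks (ρ ⊗ₖ (1 : Matrix B B ℂ)) (ptB R)
          (ptB R)ᴴ (ρ ⊗ₖ (1 : Matrix B B ℂ))).PosSemidef ∧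
        (1 / 2) * (((ptB J) * (ptB R + (ptB R)ᴴ)).trace).re = ((J * R).trace).re) ∧
    Gamma J ≤ diamondNormNT J :=
  stmt_12_general J
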